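/- arXiv:1808.03851 — 2 statements merged into one kernel-verified Lean document; each statement's English description precedes it below -/
import Mathlib

section
/- Let k be a multiple of 4 with k ≥ 8. Then every coloring χ : {1,…,4k−5} → ℤ/4ℤ admits a 4-zero-sum solution to the equation E, and there exists a coloring χ : {1,…,4k−6} → ℤ/4ℤ that admits no 4-zero-sum solution to E; equivalently, S_z(k,4) = 4k − 5. -/
/-- `hasZeroSumSolution k r N χ` says the coloring `χ` of `{1,…,N}` by `ZMod r`
admits an `r`-zero-sum solution to `x₁ + ⋯ + x_{k-1} = x_k`. -/
def hasZeroSumSolution (k r N : ℕ) (χ : ℕ → ZMod r) : Prop :=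
  ∃ (x : Fin (k - 1) → ℕ) (y : ℕ),
    (∀ i, 1 ≤ x i ∧ x i ≤ N) ∧ (1 ≤ y ∧ y ≤ N) ∧
    (∑ i, x i) = y ∧
    (∑ i, χ (x i)) + χ y = 0

/-- the tuple of variables used to build solutions: u, v, w, four copies of s, rest 1. -/
def mkx (u v w s : ℕ) : ℕ → ℕ :=
  fun n => if n = 0 then u else if n = 1 then v else if n = 2 then w else if n < 7 then s else 1

lemma zmod4_four (z : ZMod 4) : z + z + z + z = 0 := by revert z; decide

lemma mkx_cases (u v w s n : ℕ) :
    mkx u v w s n = u ∨ mkx u v w s n = v ∨ mkx u v w s n = w ∨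
      mkx u v w s n = s ∨ mkx u v w s n = 1 := by
  unfold mkx; split_ifs <;> tauto

lemma mkx_large (u v w s n : ℕ) (hn : 7 ≤ n) : mkx u v w s n = 1 := by
  unfold mkx
  rw [if_neg (by omega), if_neg (by omega), if_neg (by omega), if_neg (by omega)]

lemma builder (k : ℕ) (hk : 8 ≤ k) (hdvd : 4 ∣ k) (χ : ℕ → ZMod 4) (u v w s : ℕ)
    (hu : 1 ≤ u) (hv : 1 ≤ v) (hw : 1 ≤ w) (hs : 1 ≤ s)
    (hy : u + v + w + 4 * s + (k - 8) ≤ 4 * k - 5)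
    (hcol : χ u + χ v + χ w + χ (u + v + w + 4 * s + (k - 8)) = 0) :
    hasZeroSumSolution k 4 (4 * k - 5) χ := by
  have h7 : 7 ≤ k - 1 := by omega
  refine ⟨fun i => mkx u v w s i.val, u + v + w + 4 * s + (k - 8), ?_, ?_, ?_, ?_⟩
  · intro i
    dsimp only
    rcases mkx_cases u v w s i.val with h | h | h | h | h <;> rw [h] <;> constructor <;> omega
  · constructor <;> omega
  · rw [Fin.sum_univ_eq_sum_range (fun n => mkx u v w s n) (k - 1),
      Finset.range_eq_Ico, ← Finset.sum_Ico_consecutive _ (Nat.zero_le 7) h7]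
    have e1 : ∑ n ∈ Finset.Ico 0 7, mkx u v w s n = u + v + w + s + s + s + s := by
      rw [← Finset.range_eq_Ico]
      norm_num [Finset.sum_range_succ, mkx]
    have e2 : ∑ n ∈ Finset.Ico 7 (k - 1), mkx u v w s n = k - 1 - 7 := by
      rw [Finset.sum_congr rfl (fun n hn => mkx_large u v w s n (Finset.mem_Ico.mp hn).1),
        Finset.sum_const, Nat.card_Ico, smul_eq_mul, mul_one]
    rw [e1, e2]; omega
  · rw [Fin.sum_univ_eq_sum_range (fun n => χ (mkx u v w s n)) (k - 1),
      Finset.range_eq_Ico, ← Finset.sum_Ico_consecutive _ (Nat.zero_le 7) h7]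
    have e1 : ∑ n ∈ Finset.Ico 0 7, χ (mkx u v w s n)
        = χ u + χ v + χ w + χ s + χ s + χ s + χ s := by
      rw [← Finset.range_eq_Ico]
      norm_num [Finset.sum_range_succ, mkx]
    have e2 : ∑ n ∈ Finset.Ico 7 (k - 1), χ (mkx u v w s n) = (k - 1 - 7) • χ 1 := by
      rw [Finset.sum_congr rfl
        (fun n hn => by rw [mkx_large u v w s n (Finset.mem_Ico.mp hn).1]),
        Finset.sum_const, Nat.card_Ico]
    have e3 : ((k - 1 - 7 : ℕ) : ZMod 4) = 0 := by
      obtain ⟨t, ht⟩ : ∃ t, k - 1 - 7 = 4 * t := ⟨k / 4 - 2, by omega⟩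
      rw [ht]
      have h40 : ((4 * t : ℕ) : ZMod 4) = 4 * (t : ZMod 4) := by push_cast; ring
      rw [h40, show (4 : ZMod 4) = 0 by decide, zero_mul]
    rw [e1, e2, nsmul_eq_mul, e3, zero_mul, add_zero]
    linear_combination hcol + zmod4_four (χ s)

lemma upper (k : ℕ) (hdvd : 4 ∣ k) (hk : 8 ≤ k) (χ : ℕ → ZMod 4) :
    hasZeroSumSolution k 4 (4 * k - 5) χ := by
  by_contra hχ
  have key : ∀ u v w s : ℕ, 1 ≤ u → 1 ≤ v → 1 ≤ w → 1 ≤ s →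
      u + v + w + 4 * s + (k - 8) ≤ 4 * k - 5 →
      χ u + χ v + χ w + χ (u + v + w + 4 * s + (k - 8)) ≠ 0 :=
    fun u v w s h1 h2 h3 h4 h5 hc =>
      hχ (builder k hk hdvd χ u v w s h1 h2 h3 h4 h5 hc)
  have h01 : χ 1 + χ 1 + χ 1 + χ (k - 1) ≠ 0 := by
    have h := key 1 1 1 1 le_rfl le_rfl le_rfl le_rfl (by omega)
    rwa [show 1 + 1 + 1 + 4 * 1 + (k - 8) = k - 1 by omega] at h
  have h02 : χ 1 + χ 1 + χ 1 + χ (4 * k - 5) ≠ 0 := by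
    have h := key 1 1 1 (3 * (k / 4)) le_rfl le_rfl le_rfl (by omega) (by omega)
    rwa [show 1 + 1 + 1 + 4 * (3 * (k / 4)) + (k - 8) = 4 * k - 5 by omega] at h
  have h03 : χ 1 + χ 1 + χ 2 + χ k ≠ 0 := by
    have h := key 1 1 2 1 le_rfl le_rfl (by omega) le_rfl (by omega)
    rwa [show 1 + 1 + 2 + 4 * 1 + (k - 8) = k by omega] at h
  have h04 : χ 1 + χ 1 + χ (k - 1) + χ (3 * k - 3) ≠ 0 := by
    have h := key 1 1 (k - 1) (k / 4 + 1) le_rfl le_rfl (by omega) (by omega) (by omega)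
    rwa [show 1 + 1 + (k - 1) + 4 * (k / 4 + 1) + (k - 8) = 3 * k - 3 by omega] at h
  have h05 : χ 1 + χ 1 + χ k + χ (2 * k - 2) ≠ 0 := by
    have h := key 1 1 k 1 le_rfl le_rfl (by omega) le_rfl (by omega)
    rwa [show 1 + 1 + k + 4 * 1 + (k - 8) = 2 * k - 2 by omega] at h
  have h06 : χ 1 + χ 1 + χ (3 * k - 3) + χ (4 * k - 5) ≠ 0 := by
    have h := key 1 1 (3 * k - 3) 1 le_rfl le_rfl (by omega) le_rfl (by omega)
    rwa [show 1 + 1 + (3 * k - 3) + 4 * 1 + (k - 8) = 4 * k - 5 by omega] at h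
  have h07 : χ 1 + χ 2 + χ (k - 1) + χ (2 * k - 2) ≠ 0 := by
    have h := key 1 2 (k - 1) 1 le_rfl (by omega) (by omega) le_rfl (by omega)
    rwa [show 1 + 2 + (k - 1) + 4 * 1 + (k - 8) = 2 * k - 2 by omega] at h
  have h08 : χ 1 + χ 2 + χ k + χ (4 * k - 5) ≠ 0 := by
    have h := key 1 2 k (2 * (k / 4)) le_rfl (by omega) (by omega) (by omega) (by omega)
    rwa [show 1 + 2 + k + 4 * (2 * (k / 4)) + (k - 8) = 4 * k - 5 by omega] at h
  have h09 : χ 1 + χ 2 + χ (2 * k - 2) + χ (3 * k - 3) ≠ 0 := by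
    have h := key 1 2 (2 * k - 2) 1 le_rfl (by omega) (by omega) le_rfl (by omega)
    rwa [show 1 + 2 + (2 * k - 2) + 4 * 1 + (k - 8) = 3 * k - 3 by omega] at h
  have h10 : χ 1 + χ (k - 1) + χ (k - 1) + χ (4 * k - 5) ≠ 0 := by
    have h := key 1 (k - 1) (k - 1) (k / 4 + 1) le_rfl (by omega) (by omega) (by omega)
      (by omega)
    rwa [show 1 + (k - 1) + (k - 1) + 4 * (k / 4 + 1) + (k - 8) = 4 * k - 5 by omega] at h
  have h11 : χ 1 + χ k + χ k + χ (3 * k - 3) ≠ 0 := by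
    have h := key 1 k k 1 le_rfl (by omega) (by omega) le_rfl (by omega)
    rwa [show 1 + k + k + 4 * 1 + (k - 8) = 3 * k - 3 by omega] at h
  have h12 : χ 1 + χ k + χ (2 * k - 2) + χ (4 * k - 5) ≠ 0 := by
    have h := key 1 k (2 * k - 2) 1 le_rfl (by omega) (by omega) le_rfl (by omega)
    rwa [show 1 + k + (2 * k - 2) + 4 * 1 + (k - 8) = 4 * k - 5 by omega] at h
  have h13 : χ 2 + χ 2 + χ 2 + χ (2 * k - 2) ≠ 0 := by
    have h := key 2 2 2 (k / 4) (by omega) (by omega) (by omega) (by omega) (by omega)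
    rwa [show 2 + 2 + 2 + 4 * (k / 4) + (k - 8) = 2 * k - 2 by omega] at h
  have h14 : χ 2 + χ (k - 1) + χ (2 * k - 2) + χ (4 * k - 5) ≠ 0 := by
    have h := key 2 (k - 1) (2 * k - 2) 1 (by omega) (by omega) (by omega) le_rfl (by omega)
    rwa [show 2 + (k - 1) + (2 * k - 2) + 4 * 1 + (k - 8) = 4 * k - 5 by omega] at h
  have h15 : χ (k - 1) + χ k + χ k + χ (4 * k - 5) ≠ 0 := by
    have h := key (k - 1) k k 1 (by omega) (by omega) (by omega) le_rfl (by omega)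
    rwa [show (k - 1) + k + k + 4 * 1 + (k - 8) = 4 * k - 5 by omega] at h
  have main : ∀ Z A B C D E F : ZMod 4,
      ¬ (Z + Z + Z + B ≠ 0 ∧ Z + Z + Z + F ≠ 0 ∧ Z + Z + A + C ≠ 0 ∧ Z + Z + B + E ≠ 0 ∧
      Z + Z + C + D ≠ 0 ∧ Z + Z + E + F ≠ 0 ∧ Z + A + B + D ≠ 0 ∧ Z + A + C + F ≠ 0 ∧
      Z + A + D + E ≠ 0 ∧ Z + B + B + F ≠ 0 ∧ Z + C + C + E ≠ 0 ∧ Z + C + D + F ≠ 0 ∧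
      A + A + A + D ≠ 0 ∧ A + B + D + F ≠ 0 ∧ B + C + C + F ≠ 0) := by decide
  exact main (χ 1) (χ 2) (χ (k - 1)) (χ k) (χ (2 * k - 2)) (χ (3 * k - 3)) (χ (4 * k - 5))
    ⟨h01, h02, h03, h04, h05, h06, h07, h08, h09, h10, h11, h12, h13, h14, h15⟩

/-- the coloring witnessing the lower bound. -/
def lc (k i : ℕ) : ZMod 4 :=
  if i ≤ k - 2 then 0 else if i % 2 = 0 then 3 else if i ≤ 3 * k - 5 then 0 else 1

def lchi (k i : ℕ) : ZMod 4 := (i : ZMod 4) + lc k i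

lemma lc_small (k i : ℕ) (h : i ≤ k - 2) : lc k i = 0 := by
  unfold lc; rw [if_pos h]

lemma lc_even (k i : ℕ) (h1 : ¬ i ≤ k - 2) (h2 : i % 2 = 0) : lc k i = 3 := by
  unfold lc; rw [if_neg h1, if_pos h2]

lemma lc_odd_low (k i : ℕ) (h1 : ¬ i ≤ k - 2) (h2 : i % 2 = 1) (h3 : i ≤ 3 * k - 5) :
    lc k i = 0 := by
  unfold lc; rw [if_neg h1, if_neg (by omega), if_pos h3]

lemma lc_odd_high (k i : ℕ) (h1 : ¬ i ≤ k - 2) (h2 : i % 2 = 1) (h3 : ¬ i ≤ 3 * k - 5) :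
    lc k i = 1 := by
  unfold lc; rw [if_neg h1, if_neg (by omega), if_neg h3]

lemma lower (k : ℕ) (hdvd : 4 ∣ k) (hk : 8 ≤ k) :
    ¬ hasZeroSumSolution k 4 (4 * k - 6) (lchi k) := by
  rintro ⟨x, y, hx, hy, hsum, hcol⟩
  classical
  have hcard : (Finset.univ : Finset (Fin (k - 1))).card = k - 1 := by
    simp
  -- y is at least k-1
  have hy1 : k - 1 ≤ y := by
    have h := Finset.sum_le_sum (fun i (_ : i ∈ Finset.univ) => (hx i).1)
    rw [hsum, Finset.sum_const, hcard, smul_eq_mul, mul_one] at h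
    exact h
  -- each x i is at most 3k-4
  have hxle : ∀ i, x i ≤ 3 * k - 4 := by
    intro i
    have h1 : x i + ∑ j ∈ Finset.univ.erase i, x j = y := by
      rw [← hsum, Finset.add_sum_erase _ x (Finset.mem_univ i)]
    have h2 : (Finset.univ.erase i).card ≤ ∑ j ∈ Finset.univ.erase i, x j := by
      have := Finset.sum_le_sum (fun j (hj : j ∈ Finset.univ.erase i) => (hx j).1)
      rwa [Finset.sum_const, smul_eq_mul, mul_one] at this
    have h3 : (Finset.univ.erase i).card = k - 2 := by
      rw [Finset.card_erase_of_mem (Finset.mem_univ i), hcard]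
      omega
    omega
  set P : Fin (k - 1) → Prop := fun i => x i % 2 = 0 ∧ k - 1 ≤ x i with hP
  set S : Finset (Fin (k - 1)) := Finset.univ.filter P with hSdef
  set a : ℕ := S.card with ha
  -- the sum of the correction colors
  have hS : ∑ i, lc k (x i) = (a : ZMod 4) * 3 := by
    rw [← Finset.sum_filter_add_sum_filter_not Finset.univ P (fun i => lc k (x i))]
    have e1 : ∑ i ∈ Finset.univ.filter P, lc k (x i) = (a : ZMod 4) * 3 := by
      rw [Finset.sum_congr rfl (fun i hi => ?_), Finset.sum_const, ← hSdef, ← ha,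
        nsmul_eq_mul]
      rw [Finset.mem_filter] at hi
      exact lc_even k (x i) (by omega) hi.2.1
    have e2 : ∑ i ∈ Finset.univ.filter (fun i => ¬ P i), lc k (x i) = 0 := by
      refine Finset.sum_eq_zero (fun i hi => ?_)
      rw [Finset.mem_filter, hP] at hi
      by_cases hsmall : x i ≤ k - 2
      · exact lc_small k (x i) hsmall
      · have hodd : x i % 2 = 1 := by
          have := hi.2; omega
        exact lc_odd_low k (x i) hsmall hodd (by have := hxle i; omega)
    rw [e1, e2, add_zero]
  -- counting bound
  have hcount : a * k + (k - 1 - a) ≤ y := by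
    have hsplit : ∑ i ∈ S, x i + ∑ i ∈ Finset.univ.filter (fun i => ¬ P i), x i = y := by
      rw [hSdef, Finset.sum_filter_add_sum_filter_not, hsum]
    have hA : a * k ≤ ∑ i ∈ S, x i := by
      have hik : ∀ i ∈ S, k ≤ x i := by
        intro i hi
        rw [hSdef, Finset.mem_filter] at hi
        have h2 : x i % 2 = 0 ∧ k - 1 ≤ x i := hi.2
        omega
      have h := Finset.sum_le_sum hik
      rwa [Finset.sum_const, smul_eq_mul] at h
    have hB : k - 1 - a ≤ ∑ i ∈ Finset.univ.filter (fun i => ¬ P i), x i := by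
      have hcards : a + (Finset.univ.filter (fun i => ¬ P i)).card = k - 1 := by
        rw [ha, hSdef, Finset.card_filter_add_card_filter_not, hcard]
      have h := Finset.sum_le_sum
        (fun i (hi : i ∈ Finset.univ.filter (fun i => ¬ P i)) => (hx i).1)
      rw [Finset.sum_const, smul_eq_mul, mul_one] at h
      omega
    omega
  have hy2 : y ≤ 4 * k - 6 := hy.2
  have ha2 : a ≤ 2 := by
    by_contra hcon
    push_neg at hcon
    rcases Nat.lt_or_ge a 4 with h4 | h4
    · have h3 : a = 3 := by omega
      rw [h3] at hcount; omega
    · have : 4 * k ≤ a * k := Nat.mul_le_mul_right k h4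
      omega
  have hfact2 : a = 2 → 3 * k - 3 ≤ y := by
    intro h; rw [h] at hcount; omega
  -- the color equation
  have hexp : ((y : ℕ) : ZMod 4) + (a : ZMod 4) * 3 + (((y : ℕ) : ZMod 4) + lc k y) = 0 := by
    have e1 : ∑ i, lchi k (x i) = ((y : ℕ) : ZMod 4) + (a : ZMod 4) * 3 := by
      unfold lchi
      rw [Finset.sum_add_distrib, hS, ← Nat.cast_sum, hsum]
    rw [← e1]
    rw [← hcol]
    rfl
  have hyk : ¬ y ≤ k - 2 := by omega
  rcases Nat.even_or_odd y with ⟨j, hj⟩ | ⟨j, hj⟩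
  · -- y even
    have hcy : lc k y = 3 := lc_even k y hyk (by omega)
    rw [hcy, hj] at hexp
    push_cast at hexp
    interval_cases a <;> [skip; skip; skip] <;>
      (revert hexp; push_cast; generalize (j : ZMod 4) = u; revert u; decide)
  · -- y odd
    by_cases hylow : y ≤ 3 * k - 5
    · have hcy : lc k y = 0 := lc_odd_low k y hyk (by omega) hylow
      have ha1 : a ≤ 1 := by
        rcases Nat.lt_or_ge a 2 with h | h
        · omega
        · have := hfact2 (by omega); omega
      rw [hcy, hj] at hexp
      push_cast at hexp
      interval_cases a <;>
        (revert hexp; push_cast; generalize (j : ZMod 4) = u; revert u; decide)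
    · have hcy : lc k y = 1 := lc_odd_high k y hyk (by omega) hylow
      rw [hcy, hj] at hexp
      push_cast at hexp
      interval_cases a <;>
        (revert hexp; push_cast; generalize (j : ZMod 4) = u; revert u; decide)

theorem zero_sum_schur_eq_four (k : ℕ) (hdvd : 4 ∣ k) (hk : 8 ≤ k) :
    (∀ χ : ℕ → ZMod 4, hasZeroSumSolution k 4 (4 * k - 5) χ) ∧
    (∃ χ : ℕ → ZMod 4, ¬ hasZeroSumSolution k 4 (4 * k - 6) χ) := by
  exact ⟨fun χ => upper k hdvd hk χ, ⟨lchi k, lower k hdvd hk⟩⟩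
end

section
/- Let r be an odd prime, let k be a multiple of r with k ≥ 2r, and suppose χ : {1,…,kr−r} → ℤ/rℤ is a coloring that admits no r-zero-sum solution to the equation E. Then for every integer α with 2 ≤ α ≤ r − 1, 2·χ(α) = χ(α−1) + χ(α+1) in ℤ/rℤ. -/
/-!
Replacing a pair `α, α` of summands by `α - 1, α + 1` keeps the sum and shifts the colour sum
by the second difference `d = χ(α-1) + χ(α+1) - 2χ(α)`. Take `2(r-1)` copies of `α`, pad with
ones up to `k - 1` summands and perform `j` such replacements: the colour sum of the resulting
solution is `j d + f` with `f` independent of `j`. If `d ≠ 0`, it is invertible in `ℤ/rℤ`, so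
some `j < r` makes this zero, and the total `2(r-1)α + k - 2r + 1` still lies in `{1,…,kr-r}`.
-/

lemma List.sum_map_get_cast {β M : Type*} [AddCommMonoid M] (L : List β) (f : β → M) {n : ℕ}
    (h : L.length = n) : ∑ i : Fin n, f (L.get (Fin.cast h.symm i)) = (L.map f).sum := by
  subst h
  simp [← List.sum_ofFn]

lemma hasZeroSumSolution_of_list {k r N : ℕ} {χ : ℕ → ZMod r} (L : List ℕ)
    (hlen : L.length = k - 1) (hpos : ∀ x ∈ L, 1 ≤ x) (hsum_pos : 1 ≤ L.sum) (hsum : L.sum ≤ N)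
    (hcol : (L.map χ).sum + χ L.sum = 0) : hasZeroSumSolution k r N χ := by
  refine ⟨fun i => L.get (Fin.cast hlen.symm i), L.sum, fun i => ⟨?_, ?_⟩, ⟨hsum_pos, hsum⟩,
    ?_, ?_⟩
  · exact hpos _ (List.get_mem L _)
  · exact (List.le_sum_of_mem (List.get_mem L _)).trans hsum
  · simpa using L.sum_map_get_cast id hlen
  · rwa [L.sum_map_get_cast χ hlen]

def swappedList (α p j m : ℕ) : List ℕ :=
  List.replicate j (α - 1) ++ List.replicate j (α + 1) ++ List.replicate (2 * (p - j)) α ++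
    List.replicate m 1

section swappedList

variable {α p j m : ℕ}

lemma length_swappedList (hj : j ≤ p) : (swappedList α p j m).length = 2 * p + m := by
  simp only [swappedList, List.length_append, List.length_replicate]
  omega

lemma one_le_of_mem_swappedList (hα : 2 ≤ α) {x : ℕ} (hx : x ∈ swappedList α p j m) :
    1 ≤ x := by
  simp only [swappedList, List.mem_append, List.mem_replicate] at hx
  omega

lemma sum_swappedList (hα : 1 ≤ α) (hj : j ≤ p) :
    (swappedList α p j m).sum = 2 * p * α + m := by
  obtain ⟨q, rfl⟩ := Nat.exists_eq_add_of_le hj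
  obtain ⟨β, rfl⟩ := Nat.exists_eq_add_of_le' hα
  simp only [swappedList, List.sum_append, List.sum_replicate, smul_eq_mul, mul_one,
    Nat.add_sub_cancel, Nat.add_sub_cancel_left]
  ring

lemma sum_map_swappedList {R : Type*} [CommRing R] (χ : ℕ → R) (hj : j ≤ p) :
    ((swappedList α p j m).map χ).sum =
      j * (χ (α - 1) + χ (α + 1) - 2 * χ α) + 2 * p * χ α + m * χ 1 := by
  simp only [swappedList, List.map_append, List.map_replicate, List.sum_append,
    List.sum_replicate, nsmul_eq_mul, Nat.cast_mul, Nat.cast_sub hj, Nat.cast_ofNat]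
  ring

end swappedList

lemma ZMod.exists_lt_natCast_mul_add_eq_zero {r : ℕ} [Fact r.Prime] {d : ZMod r} (hd : d ≠ 0)
    (f : ZMod r) : ∃ j < r, (j : ZMod r) * d + f = 0 :=
  ⟨(-f / d).val, ZMod.val_lt _, by rw [ZMod.natCast_zmod_val, div_mul_cancel₀ _ hd, neg_add_cancel]⟩

lemma two_mul_pred_mul_add_le_mul_sub {r k α : ℕ} (hr : 0 < r) (hk : 2 * r ≤ k) (hα : α ≤ r - 1) :
    2 * (r - 1) * α + (k - 1 - 2 * (r - 1)) ≤ k * r - r := by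
  obtain ⟨s, rfl⟩ : ∃ s, r = s + 1 := ⟨r - 1, by omega⟩
  obtain ⟨t, rfl⟩ : ∃ t, k = 2 * (s + 1) + t := ⟨k - 2 * (s + 1), by omega⟩
  have hm : 2 * (s + 1) + t - 1 - 2 * (s + 1 - 1) = t + 1 := by omega
  rw [hm, Nat.add_sub_cancel] at *
  have : 2 * s * α ≤ 2 * s * s := by gcongr
  apply Nat.le_sub_of_add_le
  nlinarith

theorem no_solution_implies_recurrence_general (r k : ℕ) (hrp : r.Prime)
    (hk : 2 * r ≤ k) (χ : ℕ → ZMod r)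
    (hno : ¬ hasZeroSumSolution k r (k * r - r) χ)
    (α : ℕ) (h2 : 2 ≤ α) (hα : α ≤ r - 1) :
    2 * χ α = χ (α - 1) + χ (α + 1) := by
  have : Fact r.Prime := ⟨hrp⟩
  by_contra hne
  set m := k - 1 - 2 * (r - 1)
  set y := 2 * (r - 1) * α + m
  have hd : χ (α - 1) + χ (α + 1) - 2 * χ α ≠ 0 := sub_ne_zero.mpr (Ne.symm hne)
  obtain ⟨j, hjr, hj⟩ := ZMod.exists_lt_natCast_mul_add_eq_zero hd
    (2 * ((r - 1 : ℕ) : ZMod r) * χ α + m * χ 1 + χ y)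
  have hjp : j ≤ r - 1 := by omega
  apply hno
  apply hasZeroSumSolution_of_list (swappedList α (r - 1) j m)
  · rw [length_swappedList hjp]
    omega
  · exact fun x hx => one_le_of_mem_swappedList h2 hx
  · rw [sum_swappedList (by omega) hjp]
    omega
  · rw [sum_swappedList (by omega) hjp]
    exact two_mul_pred_mul_add_le_mul_sub hrp.pos hk hα
  · rw [sum_map_swappedList χ hjp, sum_swappedList (by omega) hjp]
    linear_combination hj

theorem no_solution_implies_recurrence (r k : ℕ) (hrp : r.Prime) (hodd : Odd r)
    (hdvd : r ∣ k) (hk : 2 * r ≤ k) (χ : ℕ → ZMod r)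
    (hno : ¬ hasZeroSumSolution k r (k * r - r) χ)
    (α : ℕ) (h2 : 2 ≤ α) (hα : α ≤ r - 1) :
    2 * χ α = χ (α - 1) + χ (α + 1) :=
  no_solution_implies_recurrence_general r k hrp hk χ hno α h2 hα
end
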